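/- arXiv:0905.4100 — 2 statements merged into one kernel-verified Lean document; each statement's English description precedes it below -/
import Mathlib

section
/- Let G be a bipartite graph with advertiser part A (finite) and impression part I with |I| = n ≥ 1, edge set E ⊆ A × I, and maximum matching size ν, and fix a maximum matching M of G; let I₀ ⊆ I be the set of impression types covered by M. Let f : Fin n → I be n i.i.d. uniform draws from I, and let S = |{i ∈ I₀ : ∃ t, f(t) = i}| be the number of matched impression types drawn at least once (the number of advertisers matched by the suggested matching algorithm). Then for every ε > 0, with probability at least 1 − e^{−2ε²n} − 2e^{−ε²n/2}, both S ≥ (1 − 1/e)·ν − εn and OPT(f) ≤ ν + εn hold, and consequently S ≥ (1 − 1/e)·OPT(f) − 2εn. -/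
attribute [local instance] Classical.propDecidable

/-- `P` is a matching of the realization graph determined by the draws
`f : Fin n → I` (with `I = Fin n`): every pair `(t, a) ∈ P` satisfies
`(a, f t) ∈ E`, and no time step and no advertiser appears twice in `P`. -/
def IsRealizationMatching {A : Type*} (n : ℕ) (E : Finset (A × Fin n))
    (f : Fin n → Fin n) (P : Finset (Fin n × A)) : Prop :=
  (∀ p ∈ P, (p.2, f p.1) ∈ E) ∧
    ∀ p ∈ P, ∀ q ∈ P, p ≠ q → p.1 ≠ q.1 ∧ p.2 ≠ q.2

/-- The maximum matching size `OPT(f)` of the realization graph determined by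
the draws `f`. -/
noncomputable def realizationOPT {A : Type*} [Fintype A] [DecidableEq A] (n : ℕ)
    (E : Finset (A × Fin n)) (f : Fin n → Fin n) : ℕ :=
  (Finset.univ.filter (fun P : Finset (Fin n × A) =>
    IsRealizationMatching n E f P)).sup Finset.card

section Aux


lemma exp_le_cosh_add (s y : ℝ) (hy : |y| ≤ 1) :
    Real.exp (s * y) ≤ Real.cosh s + y * Real.sinh s := by
  rw [abs_le] at hy
  have h1 : (0:ℝ) ≤ (1 - y)/2 := by linarith [hy.2]
  have h2 : (0:ℝ) ≤ (1 + y)/2 := by linarith [hy.1]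
  have hc := convexOn_exp.2 (Set.mem_univ (-s)) (Set.mem_univ s) h1 h2 (by ring)
  simp only [smul_eq_mul] at hc
  calc Real.exp (s*y) = Real.exp ((1-y)/2 * (-s) + (1+y)/2 * s) := by ring_nf
    _ ≤ (1-y)/2 * Real.exp (-s) + (1+y)/2 * Real.exp s := hc
    _ = Real.cosh s + y * Real.sinh s := by rw [Real.cosh_eq, Real.sinh_eq]; ring

lemma finset_hoeffding {V : Type*} [Fintype V] [Nonempty V] (x : V → ℝ)
    (hosc : ∀ v w, |x v - x w| ≤ 1) (s : ℝ) :
    ∑ v, Real.exp (s * (x v - (∑ w, x w) / (Fintype.card V))) ≤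
      (Fintype.card V) * Real.exp (s^2 / 2) := by
  set N : ℝ := (Fintype.card V : ℝ) with hN
  have hN0 : 0 < N := by
    have := Fintype.card_pos (α := V); positivity
  set m : ℝ := (∑ w, x w) / N with hm
  have hy : ∀ v, |x v - m| ≤ 1 := by
    intro v
    have : x v - m = (∑ w, (x v - x w)) / N := by
      rw [Finset.sum_sub_distrib, Finset.sum_const, hm]
      field_simp
      rw [Finset.card_univ, nsmul_eq_mul, ← hN, mul_comm]
    rw [this, abs_div, abs_of_pos hN0, div_le_one hN0]
    calc |∑ w, (x v - x w)| ≤ ∑ w, |x v - x w| := Finset.abs_sum_le_sum_abs _ _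
      _ ≤ ∑ _w : V, (1:ℝ) := Finset.sum_le_sum (fun w _ => hosc v w)
      _ = N := by simp [hN]
  have hsum0 : ∑ v, (x v - m) = 0 := by
    rw [Finset.sum_sub_distrib, Finset.sum_const, hm]
    field_simp
    rw [Finset.card_univ, nsmul_eq_mul, ← hN, mul_div_assoc', mul_div_cancel_left₀ _ hN0.ne', sub_self]
  calc ∑ v, Real.exp (s * (x v - m))
      ≤ ∑ v, (Real.cosh s + (x v - m) * Real.sinh s) :=
        Finset.sum_le_sum (fun v _ => exp_le_cosh_add s _ (hy v))
    _ = N * Real.cosh s + (∑ v, (x v - m)) * Real.sinh s := by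
        rw [Finset.sum_add_distrib, Finset.sum_const, ← Finset.sum_mul]; simp [hN]
    _ = N * Real.cosh s := by rw [hsum0]; ring
    _ ≤ N * Real.exp (s^2/2) := by
        have := Real.cosh_le_exp_half_sq s
        nlinarith


lemma mgf_tensor {V : Type*} [Fintype V] [Nonempty V] (s : ℝ) :
    ∀ (k : ℕ) (g : (Fin k → V) → ℝ),
      (∀ (t : Fin k) (f f' : Fin k → V), (∀ j, j ≠ t → f j = f' j) → |g f - g f'| ≤ 1) →
      ∑ f : Fin k → V, Real.exp (s * (g f - (∑ f', g f') / (Fintype.card V)^k)) ≤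
        (Fintype.card V : ℝ)^k * Real.exp (s^2 * k / 2) := by
  intro k
  induction k with
  | zero =>
    intro g _
    simp
  | succ k ih =>
    intro g hg
    set N : ℝ := (Fintype.card V : ℝ) with hN
    have hN0 : 0 < N := by have := Fintype.card_pos (α := V); positivity
    set g₀ : (Fin k → V) → ℝ := fun h => (∑ v, g (Fin.cons v h)) / N with hg₀
    have hdiff : ∀ (t : Fin k) (h h' : Fin k → V), (∀ j, j ≠ t → h j = h' j) →
        |g₀ h - g₀ h'| ≤ 1 := by
      intro t h h' hagree
      have : g₀ h - g₀ h' = (∑ v, (g (Fin.cons v h) - g (Fin.cons v h'))) / N := by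
        rw [hg₀, Finset.sum_sub_distrib]; ring
      rw [this, abs_div, abs_of_pos hN0, div_le_one hN0]
      calc |∑ v, (g (Fin.cons v h) - g (Fin.cons v h'))|
          ≤ ∑ v, |g (Fin.cons v h) - g (Fin.cons v h')| := Finset.abs_sum_le_sum_abs _ _
        _ ≤ ∑ _v : V, (1:ℝ) := by
            refine Finset.sum_le_sum (fun v _ => hg t.succ _ _ ?_)
            intro j
            refine Fin.cases ?_ ?_ j
            · intro _; simp
            · intro j' hj
              simp only [Fin.cons_succ]
              exact hagree j' (fun hh => hj (by rw [hh]))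
        _ = N := by simp [hN]
    have key : ∀ F : (Fin (k+1) → V) → ℝ,
        ∑ f, F f = ∑ h : Fin k → V, ∑ v : V, F (Fin.cons v h) := by
      intro F
      rw [← (Fin.consEquiv (fun _ : Fin (k+1) => V)).sum_comp F,
        Fintype.sum_prod_type_right]
      rfl
    have hsumtot : ∑ f, g f = N * ∑ h, g₀ h := by
      rw [key g, Finset.mul_sum]
      refine Finset.sum_congr rfl (fun h _ => ?_)
      rw [hg₀]; field_simp
    set m : ℝ := (∑ f', g f') / N^(k+1) with hm
    have hm' : m = (∑ h, g₀ h) / N^k := by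
      rw [hm, hsumtot]; field_simp; ring
    have he : Real.exp (s^2/2) * Real.exp (s^2 * k / 2) = Real.exp (s^2*((k:ℝ)+1)/2) := by
      rw [← Real.exp_add]; congr 1; ring
    have main : ∑ f, Real.exp (s * (g f - m)) ≤ N^(k+1) * Real.exp (s^2*((k:ℝ)+1)/2) := by
      calc ∑ f, Real.exp (s * (g f - m))
          = ∑ h : Fin k → V, ∑ v : V, Real.exp (s * (g (Fin.cons v h) - m)) := key _
        _ = ∑ h : Fin k → V, Real.exp (s * (g₀ h - m)) *
              ∑ v : V, Real.exp (s * (g (Fin.cons v h) - g₀ h)) := by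
            refine Finset.sum_congr rfl (fun h _ => ?_)
            rw [Finset.mul_sum]
            refine Finset.sum_congr rfl (fun v _ => ?_)
            rw [← Real.exp_add]
            ring_nf
        _ ≤ ∑ h : Fin k → V, Real.exp (s * (g₀ h - m)) * (N * Real.exp (s^2/2)) := by
            refine Finset.sum_le_sum (fun h _ => ?_)
            refine mul_le_mul_of_nonneg_left ?_ (Real.exp_nonneg _)
            have := finset_hoeffding (fun v => g (Fin.cons v h))
              (fun v w => by
                refine hg 0 _ _ ?_
                intro j
                refine Fin.cases ?_ ?_ j
                · intro hj; exact absurd rfl hj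
                · intro j' _; simp) s
            simpa [hg₀] using this
        _ = (N * Real.exp (s^2/2)) * ∑ h : Fin k → V, Real.exp (s * (g₀ h - m)) := by
            rw [← Finset.sum_mul]; ring
        _ ≤ (N * Real.exp (s^2/2)) * (N^k * Real.exp (s^2 * k / 2)) := by
            refine mul_le_mul_of_nonneg_left ?_ (by positivity)
            have := ih g₀ hdiff
            rw [← hm'] at this
            exact this
        _ = N^(k+1) * (Real.exp (s^2/2) * Real.exp (s^2 * k / 2)) := by ring
        _ = N^(k+1) * Real.exp (s^2*((k:ℝ)+1)/2) := by rw [he]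
    have : s^2*((k:ℝ)+1)/2 = s^2 * ((k:ℕ)+1 : ℕ) / 2 := by push_cast; ring
    rw [this] at main
    exact main


lemma mcdiarmid_count {V : Type*} [Fintype V] [Nonempty V] (k : ℕ) (hk : 0 < k)
    (g : (Fin k → V) → ℝ)
    (hg : ∀ (t : Fin k) (f f' : Fin k → V), (∀ j, j ≠ t → f j = f' j) → |g f - g f'| ≤ 1)
    (lam : ℝ) (hlam : 0 < lam) (B : Finset (Fin k → V))
    (hB : ∀ f ∈ B, (∑ f', g f') / (Fintype.card V)^k + lam ≤ g f) :
    ((B.card : ℝ)) ≤ (Fintype.card V : ℝ)^k * Real.exp (-lam^2 / (2*k)) := by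
  set N : ℝ := (Fintype.card V : ℝ) with hN
  set m : ℝ := (∑ f', g f') / N^k with hm
  set s : ℝ := lam / k with hs
  have hk' : (0:ℝ) < k := by exact_mod_cast hk
  have hspos : 0 < s := div_pos hlam hk'
  have h1 : (B.card : ℝ) * Real.exp (s * lam) ≤ ∑ f ∈ B, Real.exp (s * (g f - m)) := by
    have := Finset.card_nsmul_le_sum B (fun f => Real.exp (s * (g f - m)))
      (Real.exp (s * lam)) (fun f hf => by
        have hfm : m + lam ≤ g f := hB f hf
        exact Real.exp_le_exp.mpr (by nlinarith))
    simpa [nsmul_eq_mul] using this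
  have h2 : ∑ f ∈ B, Real.exp (s * (g f - m)) ≤ ∑ f : Fin k → V, Real.exp (s * (g f - m)) :=
    Finset.sum_le_sum_of_subset_of_nonneg (Finset.subset_univ _)
      (fun _ _ _ => Real.exp_nonneg _)
  have h3 := mgf_tensor s k g hg
  have h4 : (B.card : ℝ) ≤ N^k * Real.exp (s^2 * k / 2) / Real.exp (s * lam) := by
    rw [le_div_iff₀ (Real.exp_pos _)]
    calc (B.card : ℝ) * Real.exp (s * lam) ≤ ∑ f ∈ B, Real.exp (s * (g f - m)) := h1
      _ ≤ ∑ f : Fin k → V, Real.exp (s * (g f - m)) := h2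
      _ ≤ N^k * Real.exp (s^2 * k / 2) := h3
  calc (B.card : ℝ) ≤ N^k * Real.exp (s^2 * k / 2) / Real.exp (s * lam) := h4
    _ = N^k * Real.exp (s^2 * k / 2 - s * lam) := by
        rw [Real.exp_sub]; ring
    _ = N^k * Real.exp (-lam^2 / (2*k)) := by
        congr 1
        congr 1
        rw [hs]
        field_simp
        ring


section OPTlemmas
variable {A : Type*} [Fintype A] [DecidableEq A] {n : ℕ} {E : Finset (A × Fin n)}
  {f : Fin n → Fin n}

lemma card_le_OPT {P : Finset (Fin n × A)} (hP : IsRealizationMatching n E f P) :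
    P.card ≤ realizationOPT n E f :=
  Finset.le_sup (Finset.mem_filter.mpr ⟨Finset.mem_univ _, hP⟩)

lemma exists_OPT : ∃ P : Finset (Fin n × A),
    IsRealizationMatching n E f P ∧ P.card = realizationOPT n E f := by
  have hne : (Finset.univ.filter (fun P : Finset (Fin n × A) =>
      IsRealizationMatching n E f P)).Nonempty := by
    refine ⟨∅, Finset.mem_filter.mpr ⟨Finset.mem_univ _, ?_, ?_⟩⟩ <;> simp
  obtain ⟨P, hP, hcard⟩ := Finset.exists_mem_eq_sup _ hne Finset.card
  exact ⟨P, (Finset.mem_filter.mp hP).2, hcard.symm⟩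

lemma OPT_le {b : ℕ} (hb : ∀ P : Finset (Fin n × A),
    IsRealizationMatching n E f P → P.card ≤ b) : realizationOPT n E f ≤ b := by
  refine Finset.sup_le (fun P hP => hb P (Finset.mem_filter.mp hP).2)

lemma OPT_diff_le (t₀ : Fin n) (f' : Fin n → Fin n)
    (hagree : ∀ j, j ≠ t₀ → f j = f' j) :
    realizationOPT n E f ≤ realizationOPT n E f' + 1 := by
  obtain ⟨P, hP, hcard⟩ := exists_OPT (A := A) (E := E) (f := f)
  set P' := P.filter (fun p => p.1 ≠ t₀) with hP'
  have hP'M : IsRealizationMatching n E f' P' := by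
    constructor
    · intro p hp
      obtain ⟨hpP, hpt⟩ := Finset.mem_filter.mp hp
      rw [← hagree p.1 hpt]
      exact hP.1 p hpP
    · intro p hp q hq hpq
      exact hP.2 p (Finset.filter_subset _ _ hp) q (Finset.filter_subset _ _ hq) hpq
  have hsplit : P.card = P'.card + (P.filter (fun p => ¬ p.1 ≠ t₀)).card :=
    (Finset.card_filter_add_card_filter_not _).symm
  have hone : (P.filter (fun p => ¬ p.1 ≠ t₀)).card ≤ 1 := by
    refine Finset.card_le_one.mpr (fun p hp q hq => ?_)
    obtain ⟨hpP, hpt⟩ := Finset.mem_filter.mp hp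
    obtain ⟨hqP, hqt⟩ := Finset.mem_filter.mp hq
    by_contra hne
    exact (hP.2 p hpP q hqP hne).1 (by rw [not_not.mp hpt, not_not.mp hqt])
  calc realizationOPT n E f = P.card := hcard.symm
    _ ≤ P'.card + 1 := by omega
    _ ≤ realizationOPT n E f' + 1 := by
        exact Nat.add_le_add_right (card_le_OPT hP'M) 1

lemma S_diff_le (I0 : Finset (Fin n)) (t₀ : Fin n) (f' : Fin n → Fin n)
    (hagree : ∀ j, j ≠ t₀ → f j = f' j) :
    (I0.filter (fun i => ∃ t, f t = i)).card ≤
      (I0.filter (fun i => ∃ t, f' t = i)).card + 1 := by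
  have hsub : I0.filter (fun i => ∃ t, f t = i) ⊆
      insert (f t₀) (I0.filter (fun i => ∃ t, f' t = i)) := by
    intro i hi
    obtain ⟨hiM, t, ht⟩ := Finset.mem_filter.mp hi
    by_cases htt : t = t₀
    · exact Finset.mem_insert.mpr (Or.inl (by rw [← ht, htt]))
    · exact Finset.mem_insert.mpr (Or.inr (Finset.mem_filter.mpr
        ⟨hiM, t, by rw [← hagree t htt]; exact ht⟩))
  calc (I0.filter (fun i => ∃ t, f t = i)).card
      ≤ (insert (f t₀) (I0.filter (fun i => ∃ t, f' t = i))).card :=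
        Finset.card_le_card hsub
    _ ≤ _ + 1 := Finset.card_insert_le _ _

end OPTlemmas


lemma exists_cover {A : Type*} [Fintype A] [DecidableEq A] (n : ℕ) (hn : 1 ≤ n)
    (E : Finset (A × Fin n)) (ν : ℕ)
    (hν : IsGreatest {k | ∃ M' : Finset (A × Fin n), M' ⊆ E ∧
      (∀ p ∈ M', ∀ q ∈ M', p ≠ q → p.1 ≠ q.1 ∧ p.2 ≠ q.2) ∧ M'.card = k} ν) :
    ∃ (CA : Finset A) (CI : Finset (Fin n)),
      (∀ p ∈ E, p.1 ∈ CA ∨ p.2 ∈ CI) ∧ CA.card + CI.card ≤ ν := by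
  set r : A → Finset (Fin n) := fun a => (E.filter (fun p => p.1 = a)).image Prod.snd with hr
  have hrE : ∀ a i, i ∈ r a → (a, i) ∈ E := by
    intro a i hi
    obtain ⟨q, hq, hq2⟩ := Finset.mem_image.mp hi
    obtain ⟨hqE, hq1⟩ := Finset.mem_filter.mp hq
    have : q = (a, i) := Prod.ext hq1 hq2
    rwa [← this]
  have hEr : ∀ p ∈ E, p.2 ∈ r p.1 := by
    intro p hp
    exact Finset.mem_image.mpr ⟨p, Finset.mem_filter.mpr ⟨hp, rfl⟩, rfl⟩
  set d : ℕ := Finset.univ.powerset.sup (fun T : Finset A => T.card - (T.biUnion r).card)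
    with hd
  have hdle : ∀ T : Finset A, T.card - (T.biUnion r).card ≤ d :=
    fun T => Finset.le_sup (f := fun T : Finset A => T.card - (T.biUnion r).card)
      (Finset.mem_powerset.mpr (Finset.subset_univ T))
  -- Hall with d dummy vertices
  set il : Fin n ↪ (Fin n ⊕ Fin d) := ⟨Sum.inl, Sum.inl_injective⟩ with hil
  set ir : Fin d ↪ (Fin n ⊕ Fin d) := ⟨Sum.inr, Sum.inr_injective⟩ with hir
  set r' : A → Finset (Fin n ⊕ Fin d) :=
    fun a => (r a).map il ∪ Finset.univ.map ir with hr'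
  have hall : ∀ T : Finset A, T.card ≤ (T.biUnion r').card := by
    intro T
    rcases T.eq_empty_or_nonempty with hT | hT
    · simp [hT]
    · have hsub : (T.biUnion r).map il ∪ Finset.univ.map ir ⊆ T.biUnion r' := by
        intro x hx
        rcases Finset.mem_union.mp hx with hx | hx
        · obtain ⟨i, hi, rfl⟩ := Finset.mem_map.mp hx
          obtain ⟨a, ha, hia⟩ := Finset.mem_biUnion.mp hi
          exact Finset.mem_biUnion.mpr ⟨a, ha, Finset.mem_union_left _
            (Finset.mem_map.mpr ⟨i, hia, rfl⟩)⟩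
        · obtain ⟨a, ha⟩ := hT
          exact Finset.mem_biUnion.mpr ⟨a, ha, Finset.mem_union_right _ hx⟩
      have hdisj : Disjoint ((T.biUnion r).map il) (Finset.univ.map ir) := by
        rw [Finset.disjoint_left]
        intro x hx hx'
        obtain ⟨i, _, rfl⟩ := Finset.mem_map.mp hx
        obtain ⟨b, _, hb⟩ := Finset.mem_map.mp hx'
        rw [hil, hir] at hb
        simp at hb
      have hcard : ((T.biUnion r).map il ∪ Finset.univ.map ir).card =
          (T.biUnion r).card + d := by
        rw [Finset.card_union_of_disjoint hdisj, Finset.card_map, Finset.card_map]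
        simp
      have := hdle T
      have := Finset.card_le_card hsub
      omega
  obtain ⟨g, hginj, hgr⟩ :=
    (Finset.all_card_le_biUnion_card_iff_exists_injective r').mp hall
  -- extract the matching
  set el : A → Fin n := fun a => Sum.elim id (fun _ => (⟨0, hn⟩ : Fin n)) (g a) with hel
  set S : Finset A := Finset.univ.filter (fun a => ∃ i, g a = Sum.inl i) with hS
  have hgel : ∀ a ∈ S, g a = Sum.inl (el a) := by
    intro a ha
    obtain ⟨i, hi⟩ := (Finset.mem_filter.mp ha).2
    rw [hel]; simp [hi]
  set M' : Finset (A × Fin n) := S.image (fun a => (a, el a)) with hM'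
  have hmem : ∀ p ∈ M', g p.1 = Sum.inl p.2 := by
    intro p hp
    obtain ⟨a, ha, rfl⟩ := Finset.mem_image.mp hp
    exact hgel a ha
  have hM'E : M' ⊆ E := by
    intro p hp
    have hgi := hmem p hp
    have : Sum.inl p.2 ∈ r' p.1 := hgi ▸ hgr p.1
    rcases Finset.mem_union.mp this with h | h
    · obtain ⟨i, hi, hii⟩ := Finset.mem_map.mp h
      have : i = p.2 := Sum.inl_injective hii
      subst this
      simpa using hrE p.1 _ hi
    · obtain ⟨b, _, hb⟩ := Finset.mem_map.mp h
      exact absurd hb (by simp [hir])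
  have hM'match : ∀ p ∈ M', ∀ q ∈ M', p ≠ q → p.1 ≠ q.1 ∧ p.2 ≠ q.2 := by
    intro p hp q hq hpq
    have h1 := hmem p hp
    have h2 := hmem q hq
    constructor
    · intro h
      apply hpq
      have : (Sum.inl p.2 : Fin n ⊕ Fin d) = Sum.inl q.2 := by rw [← h1, ← h2, h]
      exact Prod.ext h (Sum.inl_injective this)
    · intro h
      apply hpq
      have : g p.1 = g q.1 := by rw [h1, h2, h]
      exact Prod.ext (hginj this) h
  have hM'card : M'.card = S.card := by
    rw [hM']
    exact Finset.card_image_of_injective _ (fun a b hab => (Prod.mk.injEq _ _ _ _).mp hab |>.1)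
  have hScompl : (Finset.univ.filter (fun a => ¬ ∃ i, g a = Sum.inl i)).card ≤ d := by
    have : (Finset.univ.filter (fun a => ¬ ∃ i, g a = Sum.inl i)).card ≤
        (Finset.univ.map ir).card := by
      refine Finset.card_le_card_of_injOn g ?_ (fun a _ b _ hab => hginj hab)
      intro a ha
      have h2 := (Finset.mem_filter.mp ha).2
      rcases hg : g a with i | b
      · exact absurd ⟨i, hg⟩ h2
      · exact Finset.mem_map.mpr ⟨b, Finset.mem_univ _, rfl⟩
    simpa using this
  have hcardA : Fintype.card A ≤ ν + d := by
    have hsplit : S.card + (Finset.univ.filter (fun a => ¬ ∃ i, g a = Sum.inl i)).card =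
        Fintype.card A := by
      rw [hS]
      rw [Finset.card_filter_add_card_filter_not]
      exact Finset.card_univ
    have hν2 : M'.card ≤ ν := hν.2 ⟨M', hM'E, hM'match, rfl⟩
    omega
  -- extract the cover
  rcases Nat.eq_zero_or_pos d with hd0 | hd0
  · exact ⟨Finset.univ, ∅, fun p _ => Or.inl (Finset.mem_univ _), by
      simpa [hd0] using hcardA⟩
  · obtain ⟨T, _, hTd⟩ := Finset.exists_mem_eq_sup Finset.univ.powerset
      ⟨∅, Finset.mem_powerset.mpr (Finset.empty_subset _)⟩
      (fun T : Finset A => T.card - (T.biUnion r).card)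
    refine ⟨Finset.univ \ T, T.biUnion r, ?_, ?_⟩
    · intro p hp
      by_cases hpT : p.1 ∈ T
      · exact Or.inr (Finset.mem_biUnion.mpr ⟨p.1, hpT, hEr p hp⟩)
      · exact Or.inl (Finset.mem_sdiff.mpr ⟨Finset.mem_univ _, hpT⟩)
    · have h1 : (Finset.univ \ T).card = Fintype.card A - T.card := by
        rw [Finset.card_sdiff_of_subset (Finset.subset_univ T), Finset.card_univ]
      have h2 : T.card ≤ Fintype.card A := by
        rw [← Finset.card_univ]; exact Finset.card_le_card (Finset.subset_univ T)
      have hTd' : d = T.card - (T.biUnion r).card := hTd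
      omega


lemma filter_val_card (n : ℕ) (hn : 1 ≤ n) (t : Fin n) (s : Finset (Fin n)) :
    (Finset.univ.filter (fun f : Fin n → Fin n => f t ∈ s)).card = s.card * n^(n-1) := by
  have hset : Finset.univ.filter (fun f : Fin n → Fin n => f t ∈ s) =
      Fintype.piFinset (fun j => if j = t then s else Finset.univ) := by
    ext f
    simp only [Finset.mem_filter, Finset.mem_univ, true_and, Fintype.mem_piFinset]
    constructor
    · intro h j
      split_ifs with h'
      · subst h'; exact h
      · exact Finset.mem_univ _
    · intro h
      have := h t
      simpa using this
  rw [hset, Fintype.card_piFinset]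
  rw [← Finset.mul_prod_erase Finset.univ _ (Finset.mem_univ t)]
  have hrest : ∀ j ∈ Finset.univ.erase t,
      ((if j = t then s else Finset.univ).card) = n := by
    intro j hj
    rw [if_neg (Finset.mem_erase.mp hj).1]
    simp
  rw [Finset.prod_congr rfl hrest, Finset.prod_const,
    Finset.card_erase_of_mem (Finset.mem_univ t)]
  simp

lemma filter_never_card (n : ℕ) (i : Fin n) :
    (Finset.univ.filter (fun f : Fin n → Fin n => ∀ t, f t ≠ i)).card = (n-1)^n := by
  have hset : Finset.univ.filter (fun f : Fin n → Fin n => ∀ t, f t ≠ i) =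
      Fintype.piFinset (fun _ => Finset.univ.erase i) := by
    ext f
    simp [Fintype.mem_piFinset]
  rw [hset, Fintype.card_piFinset]
  simp [Finset.card_erase_of_mem]

lemma sum_S_eq (n : ℕ) (I0 : Finset (Fin n)) :
    ∑ f : Fin n → Fin n, (I0.filter (fun i => ∃ t, f t = i)).card =
      I0.card * (n^n - (n-1)^n) := by
  have h1 : ∀ f : Fin n → Fin n, (I0.filter (fun i => ∃ t, f t = i)).card =
      ∑ i ∈ I0, if (∃ t, f t = i) then 1 else 0 := fun f => Finset.card_filter _ _
  rw [Finset.sum_congr rfl (fun f _ => h1 f), Finset.sum_comm]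
  have h2 : ∀ i ∈ I0, (∑ f : Fin n → Fin n, if (∃ t, f t = i) then 1 else 0) =
      n^n - (n-1)^n := by
    intro i _
    rw [← Finset.card_filter]
    have hsplit : (Finset.univ.filter (fun f : Fin n → Fin n => ∃ t, f t = i)).card
        + (Finset.univ.filter (fun f : Fin n → Fin n => ¬ ∃ t, f t = i)).card
        = (Finset.univ : Finset (Fin n → Fin n)).card :=
      Finset.card_filter_add_card_filter_not _
    have hneg : (Finset.univ.filter (fun f : Fin n → Fin n => ¬ ∃ t, f t = i)).card
        = (n-1)^n := by
      rw [← filter_never_card n i]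
      congr 1
      ext f
      simp
    have huniv : (Finset.univ : Finset (Fin n → Fin n)).card = n^n := by
      simp
    rw [hneg, huniv] at hsplit
    exact Nat.eq_sub_of_add_eq hsplit
  rw [Finset.sum_congr rfl h2, Finset.sum_const, smul_eq_mul]

lemma sum_N_eq (n : ℕ) (hn : 1 ≤ n) (CI : Finset (Fin n)) :
    ∑ f : Fin n → Fin n, (Finset.univ.filter (fun t => f t ∈ CI)).card =
      CI.card * n^n := by
  have h1 : ∀ f : Fin n → Fin n, (Finset.univ.filter (fun t => f t ∈ CI)).card =
      ∑ t : Fin n, if f t ∈ CI then 1 else 0 := fun f => Finset.card_filter _ _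
  rw [Finset.sum_congr rfl (fun f _ => h1 f), Finset.sum_comm]
  have h2 : ∀ t : Fin n, (∑ f : Fin n → Fin n, if f t ∈ CI then 1 else 0) =
      CI.card * n^(n-1) := by
    intro t
    rw [← Finset.card_filter]
    exact filter_val_card n hn t CI
  rw [Finset.sum_congr rfl (fun t _ => h2 t), Finset.sum_const, smul_eq_mul]
  simp only [Finset.card_univ, Fintype.card_fin]
  rw [← mul_assoc, mul_comm (n : ℕ) CI.card, mul_assoc]
  congr 1
  rw [← pow_succ']
  congr 1
  omega


lemma OPT_le_cover {A : Type*} [Fintype A] [DecidableEq A] {n : ℕ}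
    {E : Finset (A × Fin n)} (CA : Finset A) (CI : Finset (Fin n))
    (hcover : ∀ p ∈ E, p.1 ∈ CA ∨ p.2 ∈ CI) (f : Fin n → Fin n) :
    realizationOPT n E f ≤ CA.card + (Finset.univ.filter (fun t => f t ∈ CI)).card := by
  refine OPT_le (fun P hP => ?_)
  have hsplit : (P.filter (fun p => p.2 ∈ CA)).card
      + (P.filter (fun p => ¬ p.2 ∈ CA)).card = P.card :=
    Finset.card_filter_add_card_filter_not _
  have h1 : (P.filter (fun p => p.2 ∈ CA)).card ≤ CA.card := by
    refine Finset.card_le_card_of_injOn Prod.snd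
      (fun p hp => (Finset.mem_filter.mp hp).2) ?_
    intro p hp q hq hpq
    by_contra hne
    exact (hP.2 p (Finset.filter_subset _ _ hp) q (Finset.filter_subset _ _ hq) hne).2 hpq
  have h2 : (P.filter (fun p => ¬ p.2 ∈ CA)).card ≤
      (Finset.univ.filter (fun t => f t ∈ CI)).card := by
    refine Finset.card_le_card_of_injOn Prod.fst ?_ ?_
    · intro p hp
      obtain ⟨hpP, hpa⟩ := Finset.mem_filter.mp hp
      have hpE := hP.1 p hpP
      rcases hcover _ hpE with h | h
      · exact absurd h hpa
      · exact Finset.mem_filter.mpr ⟨Finset.mem_univ _, h⟩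
    · intro p hp q hq hpq
      by_contra hne
      exact (hP.2 p (Finset.filter_subset _ _ hp) q (Finset.filter_subset _ _ hq) hne).1 hpq
  omega

lemma sum_OPT_le {A : Type*} [Fintype A] [DecidableEq A] (n : ℕ) (hn : 1 ≤ n)
    (E : Finset (A × Fin n)) (ν : ℕ) (CA : Finset A) (CI : Finset (Fin n))
    (hcover : ∀ p ∈ E, p.1 ∈ CA ∨ p.2 ∈ CI) (hsize : CA.card + CI.card ≤ ν) :
    ∑ f : Fin n → Fin n, realizationOPT n E f ≤ ν * n^n := by
  calc ∑ f : Fin n → Fin n, realizationOPT n E f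
      ≤ ∑ f : Fin n → Fin n,
          (CA.card + (Finset.univ.filter (fun t => f t ∈ CI)).card) :=
        Finset.sum_le_sum (fun f _ => OPT_le_cover CA CI hcover f)
    _ = (Finset.univ : Finset (Fin n → Fin n)).card * CA.card
          + ∑ f : Fin n → Fin n, (Finset.univ.filter (fun t => f t ∈ CI)).card := by
        rw [Finset.sum_add_distrib, Finset.sum_const, smul_eq_mul]
    _ = n^n * CA.card + CI.card * n^n := by
        rw [sum_N_eq n hn CI]
        congr 1
        simp
    _ ≤ ν * n^n := by
        have : n^n * CA.card + CI.card * n^n = (CA.card + CI.card) * n^n := by ring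
        rw [this]
        exact Nat.mul_le_mul_right _ hsize

lemma pow_pred_le (n : ℕ) (hn : 1 ≤ n) :
    (((n-1 : ℕ)) : ℝ)^n ≤ (n:ℝ)^n / Real.exp 1 := by
  rcases Nat.lt_or_ge n 2 with h2 | h2
  · interval_cases n
    simp [Real.exp_pos]
    positivity
  · have hn2 : (2:ℝ) ≤ n := by exact_mod_cast h2
    set x : ℝ := 1 - 1/(n:ℝ) with hx
    have hx0 : 0 < x := by
      rw [hx]
      have : 1/(n:ℝ) ≤ 1/2 := by
        apply one_div_le_one_div_of_le <;> linarith
      linarith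
    have hcast : (((n-1 : ℕ)) : ℝ) = (n:ℝ) * x := by
      have : ((n-1 : ℕ) : ℝ) = (n:ℝ) - 1 := by
        have : (1:ℕ) ≤ n := hn
        push_cast [Nat.cast_sub this]
        ring
      rw [this, hx]
      field_simp
    have hlog : Real.log x ≤ -(1/(n:ℝ)) := by
      have := Real.log_le_sub_one_of_pos hx0
      rw [hx] at this ⊢
      linarith
    have hxn : x^n ≤ Real.exp (-1) := by
      have hxe : x = Real.exp (Real.log x) := (Real.exp_log hx0).symm
      rw [hxe, ← Real.exp_nat_mul]
      apply Real.exp_le_exp.mpr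
      have hn0 : (0:ℝ) < n := by linarith
      calc (n:ℝ) * Real.log x ≤ (n:ℝ) * (-(1/(n:ℝ))) := by
            exact mul_le_mul_of_nonneg_left hlog (le_of_lt hn0)
        _ = -1 := by field_simp
    calc (((n-1 : ℕ)) : ℝ)^n = (n:ℝ)^n * x^n := by rw [hcast, mul_pow]
      _ ≤ (n:ℝ)^n * Real.exp (-1) := by
          apply mul_le_mul_of_nonneg_left hxn (by positivity)
      _ = (n:ℝ)^n / Real.exp 1 := by
          rw [Real.exp_neg]
          ring


end Aux

set_option maxHeartbeats 1000000 in
/-- Online stochastic matching with unit arrival rates: for a bipartite graph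
with advertiser part `A`, impression part `I = Fin n` (`n ≥ 1`), edge set
`E ⊆ A × I`, maximum matching size `ν`, and a fixed maximum matching `M`
covering the impression types `I₀ = M.image Prod.snd`, if `f : Fin n → I`
consists of `n` i.i.d. uniform draws and
`S = |{i ∈ I₀ : ∃ t, f t = i}|` is the number of advertisers matched by the
suggested matching algorithm, then for every `ε > 0`, with probability at
least `1 − e^{−2ε²n} − 2e^{−ε²n/2}`, both `S ≥ (1 − 1/e)·ν − εn` and
`OPT(f) ≤ ν + εn` hold, and consequently `S ≥ (1 − 1/e)·OPT(f) − 2εn`. -/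
theorem suggested_matching_guarantee {A : Type*} [Fintype A] [DecidableEq A]
    (n : ℕ) (hn : 1 ≤ n) (E : Finset (A × Fin n)) (ν : ℕ) (M : Finset (A × Fin n))
    (hME : M ⊆ E)
    (hMmatch : ∀ p ∈ M, ∀ q ∈ M, p ≠ q → p.1 ≠ q.1 ∧ p.2 ≠ q.2)
    (hMcard : M.card = ν)
    (hν : IsGreatest {k | ∃ M' : Finset (A × Fin n), M' ⊆ E ∧
      (∀ p ∈ M', ∀ q ∈ M', p ≠ q → p.1 ≠ q.1 ∧ p.2 ≠ q.2) ∧ M'.card = k} ν)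
    (ε : ℝ) (hε : 0 < ε) :
    1 - Real.exp (-2 * ε ^ 2 * n) - 2 * Real.exp (-ε ^ 2 * n / 2) ≤
      ((Finset.univ.filter (fun f : Fin n → Fin n =>
          ((1 - 1 / Real.exp 1) * ν - ε * n
              ≤ (((M.image Prod.snd).filter (fun i => ∃ t, f t = i)).card : ℝ))
            ∧ ((realizationOPT n E f : ℝ) ≤ (ν : ℝ) + ε * n)
            ∧ ((1 - 1 / Real.exp 1) * (realizationOPT n E f : ℝ) - 2 * ε * n
              ≤ (((M.image Prod.snd).filter (fun i => ∃ t, f t = i)).card : ℝ)))).card : ℝ)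
        / (n : ℝ) ^ n := by
  haveI : Nonempty (Fin n) := ⟨⟨0, hn⟩⟩
  have hn0 : (0:ℝ) < n := by exact_mod_cast hn
  have hNn : (0:ℝ) < (n:ℝ)^n := by positivity
  have hepos : (0:ℝ) < Real.exp 1 := Real.exp_pos 1
  have he1 : (1:ℝ) ≤ Real.exp 1 := by nlinarith [Real.add_one_le_exp (1:ℝ)]
  have hcnn : (0:ℝ) ≤ 1 - 1/Real.exp 1 := by
    have h : 1/Real.exp 1 ≤ 1 := by rw [div_le_one hepos]; exact he1
    linarith
  have hcle : 1 - 1/Real.exp 1 ≤ 1 := by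
    have : (0:ℝ) < 1/Real.exp 1 := by positivity
    linarith
  set I0 : Finset (Fin n) := M.image Prod.snd with hI0
  have hI0card : I0.card = ν := by
    rw [hI0, ← hMcard]
    apply Finset.card_image_of_injOn
    intro p hp q hq hpq
    by_contra hne
    exact (hMmatch p hp q hq hne).2 hpq
  -- bounded differences
  have hSbd : ∀ (t : Fin n) (f f' : Fin n → Fin n), (∀ j, j ≠ t → f j = f' j) →
      |(-(((I0.filter (fun i => ∃ t', f t' = i)).card : ℝ))) -
        (-(((I0.filter (fun i => ∃ t', f' t' = i)).card : ℝ)))| ≤ 1 := by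
    intro t f f' hagree
    have h1 := S_diff_le (f := f) I0 t f' hagree
    have h2 := S_diff_le (f := f') I0 t f (fun j hj => (hagree j hj).symm)
    rw [abs_sub_le_iff]
    constructor
    · have := (Nat.cast_le (α := ℝ)).mpr h2; push_cast at this ⊢; linarith
    · have := (Nat.cast_le (α := ℝ)).mpr h1; push_cast at this ⊢; linarith
  have hObd : ∀ (t : Fin n) (f f' : Fin n → Fin n), (∀ j, j ≠ t → f j = f' j) →
      |((realizationOPT n E f : ℝ)) - ((realizationOPT n E f' : ℝ))| ≤ 1 := by
    intro t f f' hagree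
    have h1 := OPT_diff_le (E := E) (f := f) t f' hagree
    have h2 := OPT_diff_le (E := E) (f := f') t f (fun j hj => (hagree j hj).symm)
    rw [abs_sub_le_iff]
    constructor
    · have := (Nat.cast_le (α := ℝ)).mpr h1; push_cast at this ⊢; linarith
    · have := (Nat.cast_le (α := ℝ)).mpr h2; push_cast at this ⊢; linarith
  -- expectations
  have hsumS : (ν:ℝ) * ((n:ℝ)^n - ((n-1:ℕ):ℝ)^n) =
      ∑ f : Fin n → Fin n, (((I0.filter (fun i => ∃ t', f t' = i)).card : ℝ)) := by
    have h := sum_S_eq n I0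
    have hle : (n-1:ℕ)^n ≤ n^n := Nat.pow_le_pow_left (Nat.sub_le n 1) n
    have hcast : ((∑ f : Fin n → Fin n,
        (I0.filter (fun i => ∃ t', f t' = i)).card : ℕ) : ℝ)
        = ∑ f : Fin n → Fin n, (((I0.filter (fun i => ∃ t', f t' = i)).card : ℝ)) := by
      push_cast
      rfl
    rw [← hcast, h, hI0card, Nat.cast_mul, Nat.cast_sub hle]
    push_cast
    ring
  have hESlb : (1 - 1/Real.exp 1) * ν * (n:ℝ)^n ≤
      ∑ f : Fin n → Fin n, (((I0.filter (fun i => ∃ t', f t' = i)).card : ℝ)) := by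
    rw [← hsumS]
    have hp := pow_pred_le n hn
    have hν0 : (0:ℝ) ≤ ν := Nat.cast_nonneg ν
    have hmul := mul_le_mul_of_nonneg_left hp hν0
    have hdiv : (ν:ℝ) * ((n:ℝ)^n / Real.exp 1) = (ν:ℝ) * (n:ℝ)^n / Real.exp 1 := by ring
    rw [hdiv] at hmul
    have : (1 - 1/Real.exp 1) * ν * (n:ℝ)^n
        = (ν:ℝ) * (n:ℝ)^n - (ν:ℝ) * (n:ℝ)^n / Real.exp 1 := by
      field_simp
    rw [this]
    nlinarith
  have hEOub : ∑ f : Fin n → Fin n, ((realizationOPT n E f : ℝ)) ≤ (ν:ℝ) * (n:ℝ)^n := by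
    obtain ⟨CA, CI, hcov, hsz⟩ := exists_cover n hn E ν hν
    have h := sum_OPT_le n hn E ν CA CI hcov hsz
    calc ∑ f : Fin n → Fin n, ((realizationOPT n E f : ℝ))
        = ((∑ f : Fin n → Fin n, realizationOPT n E f : ℕ) : ℝ) := by push_cast; rfl
      _ ≤ ((ν * n^n : ℕ) : ℝ) := Nat.cast_le.mpr h
      _ = (ν:ℝ) * (n:ℝ)^n := by push_cast; ring
  -- bad events
  have hlam : (0:ℝ) < ε * n := by positivity
  set Bad1 : Finset (Fin n → Fin n) := Finset.univ.filter (fun f : Fin n → Fin n =>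
      (∑ f' : Fin n → Fin n, -(((I0.filter (fun i => ∃ t', f' t' = i)).card : ℝ)))
        / (n:ℝ)^n + ε*n ≤ -(((I0.filter (fun i => ∃ t', f t' = i)).card : ℝ))) with hB1
  set Bad2 : Finset (Fin n → Fin n) := Finset.univ.filter (fun f : Fin n → Fin n =>
      (∑ f' : Fin n → Fin n, ((realizationOPT n E f' : ℝ)))
        / (n:ℝ)^n + ε*n ≤ ((realizationOPT n E f : ℝ))) with hB2
  have hBad1 := mcdiarmid_count n hn
    (fun f => -(((I0.filter (fun i => ∃ t', f t' = i)).card : ℝ))) hSbd (ε*n) hlam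
    Bad1 (fun f hf => by
      have := (Finset.mem_filter.mp hf).2
      simpa using this)
  have hBad2 := mcdiarmid_count n hn
    (fun f => ((realizationOPT n E f : ℝ))) hObd (ε*n) hlam
    Bad2 (fun f hf => by
      have := (Finset.mem_filter.mp hf).2
      simpa using this)
  simp only [Fintype.card_fin] at hBad1 hBad2
  have hexp2 : -(ε*(n:ℝ))^2/(2*(n:ℝ)) = -ε^2*(n:ℝ)/2 := by
    field_simp
  rw [hexp2] at hBad1 hBad2
  -- good set inclusion
  have hsub : Finset.univ \ (Bad1 ∪ Bad2) ⊆ Finset.univ.filter (fun f : Fin n → Fin n =>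
      ((1 - 1 / Real.exp 1) * ν - ε * n
          ≤ ((I0.filter (fun i => ∃ t, f t = i)).card : ℝ))
        ∧ ((realizationOPT n E f : ℝ) ≤ (ν : ℝ) + ε * n)
        ∧ ((1 - 1 / Real.exp 1) * (realizationOPT n E f : ℝ) - 2 * ε * n
          ≤ ((I0.filter (fun i => ∃ t, f t = i)).card : ℝ))) := by
    intro f hf
    rw [Finset.mem_sdiff, Finset.mem_union] at hf
    obtain ⟨-, hf2⟩ := hf
    have hnb1 : ¬ ((∑ f' : Fin n → Fin n,
        -(((I0.filter (fun i => ∃ t', f' t' = i)).card : ℝ)))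
          / (n:ℝ)^n + ε*n ≤ -(((I0.filter (fun i => ∃ t', f t' = i)).card : ℝ))) :=
      fun h => hf2 (Or.inl (Finset.mem_filter.mpr ⟨Finset.mem_univ _, h⟩))
    have hnb2 : ¬ ((∑ f' : Fin n → Fin n, ((realizationOPT n E f' : ℝ)))
          / (n:ℝ)^n + ε*n ≤ ((realizationOPT n E f : ℝ))) :=
      fun h => hf2 (Or.inr (Finset.mem_filter.mpr ⟨Finset.mem_univ _, h⟩))
    rw [not_le] at hnb1 hnb2
    rw [Finset.sum_neg_distrib, neg_div] at hnb1
    -- derive the three properties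
    have hms : (1 - 1/Real.exp 1) * ν ≤
        (∑ f' : Fin n → Fin n, (((I0.filter (fun i => ∃ t', f' t' = i)).card : ℝ)))
          / (n:ℝ)^n := by
      rw [le_div_iff₀ hNn]
      exact hESlb
    have hmo : (∑ f' : Fin n → Fin n, ((realizationOPT n E f' : ℝ))) / (n:ℝ)^n ≤ ν := by
      rw [div_le_iff₀ hNn]
      exact hEOub
    have hc1 : (1 - 1 / Real.exp 1) * ν - ε * n
        ≤ ((I0.filter (fun i => ∃ t, f t = i)).card : ℝ) := by linarith
    have hc2 : (realizationOPT n E f : ℝ) ≤ (ν : ℝ) + ε * n := by linarith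
    have hc3 : (1 - 1 / Real.exp 1) * (realizationOPT n E f : ℝ) - 2 * ε * n
        ≤ ((I0.filter (fun i => ∃ t, f t = i)).card : ℝ) := by
      have h3 : (1 - 1/Real.exp 1) * (realizationOPT n E f : ℝ)
          ≤ (1 - 1/Real.exp 1) * ((ν:ℝ) + ε * n) := mul_le_mul_of_nonneg_left hc2 hcnn
      have h4 : (1 - 1/Real.exp 1) * (ε * n) ≤ ε * n :=
        mul_le_of_le_one_left hlam.le hcle
      have h5 : (1 - 1/Real.exp 1) * ((ν:ℝ) + ε * n)
          = (1 - 1/Real.exp 1) * (ν:ℝ) + (1 - 1/Real.exp 1) * (ε * n) := by ring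
      linarith
    exact Finset.mem_filter.mpr ⟨Finset.mem_univ _, hc1, hc2, hc3⟩
  -- final counting
  set Good : Finset (Fin n → Fin n) := Finset.univ.filter (fun f : Fin n → Fin n =>
      ((1 - 1 / Real.exp 1) * ν - ε * n
          ≤ ((I0.filter (fun i => ∃ t, f t = i)).card : ℝ))
        ∧ ((realizationOPT n E f : ℝ) ≤ (ν : ℝ) + ε * n)
        ∧ ((1 - 1 / Real.exp 1) * (realizationOPT n E f : ℝ) - 2 * ε * n
          ≤ ((I0.filter (fun i => ∃ t, f t = i)).card : ℝ))) with hGood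
  have hcount : (n:ℕ)^n ≤ Good.card + (Bad1.card + Bad2.card) := by
    have h1 : (Finset.univ \ (Bad1 ∪ Bad2)).card + (Bad1 ∪ Bad2).card
        = (Finset.univ : Finset (Fin n → Fin n)).card :=
      Finset.card_sdiff_add_card_eq_card (Finset.subset_univ _)
    have h2 := Finset.card_le_card hsub
    have h3 := Finset.card_union_le Bad1 Bad2
    have h4 : (Finset.univ : Finset (Fin n → Fin n)).card = n^n := by simp
    omega
  have hcR : ((n:ℝ))^n ≤ (Good.card : ℝ) + ((Bad1.card : ℝ) + (Bad2.card : ℝ)) := by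
    exact_mod_cast hcount
  rw [le_div_iff₀ hNn]
  have hA : (0:ℝ) ≤ Real.exp (-2*ε^2*n) := (Real.exp_pos _).le
  nlinarith [hBad1, hBad2, hcR, mul_nonneg hA hNn.le, Real.exp_pos (-ε^2*(n:ℝ)/2)]
end

section
/- Consider the complete bipartite instance: A and I each have n ≥ 1 elements and E = A × I, and let f : Fin n → I be n i.i.d. uniform draws. Then (i) for every realization f, the maximum matching size of the realization graph equals n; (ii) the number of advertisers matched by the suggested matching algorithm equals the number of distinct values of f, whose expectation is n·(1 − (1 − 1/n)ⁿ); and (iii) consequently the expected approximation ratio of the suggested matching algorithm on this instance equals 1 − (1 − 1/n)ⁿ, which tends to 1 − 1/e as n → ∞. -/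
open Filter

attribute [local instance] Classical.propDecidable

private lemma opt_eq_aux (n : ℕ) (f : Fin n → Fin n) :
    realizationOPT n (Finset.univ : Finset (Fin n × Fin n)) f = n := by
  unfold realizationOPT IsRealizationMatching
  apply le_antisymm
  · apply Finset.sup_le
    intro P hP
    simp only [Finset.mem_filter] at hP
    obtain ⟨-, -, h2⟩ := hP
    calc P.card = (P.image Prod.fst).card := by
          rw [Finset.card_image_of_injOn]
          intro p hp q hq hpq
          by_contra hne
          exact (h2 p hp q hq hne).1 hpq
      _ ≤ Fintype.card (Fin n) := Finset.card_le_univ _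
      _ = n := by simp
  · have hmem : (Finset.univ.image (fun t : Fin n => (t, t))) ∈
        Finset.univ.filter (fun P : Finset (Fin n × Fin n) =>
          (∀ p ∈ P, (p.2, f p.1) ∈ (Finset.univ : Finset (Fin n × Fin n))) ∧
            ∀ p ∈ P, ∀ q ∈ P, p ≠ q → p.1 ≠ q.1 ∧ p.2 ≠ q.2) := by
      simp only [Finset.mem_filter, Finset.mem_univ, true_and]
      constructor
      · intro p _; simp
      · intro p hp q hq hne
        simp only [Finset.mem_image, Finset.mem_univ, true_and] at hp hq
        obtain ⟨a, ha⟩ := hp; obtain ⟨b, hb⟩ := hq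
        subst ha; subst hb
        constructor <;> simp_all
    have h := Finset.le_sup (f := Finset.card) hmem
    rw [Finset.card_image_of_injective _ (fun a b h => (Prod.mk.injEq _ _ _ _).mp h |>.1)] at h
    simpa using h

private lemma sum_card_aux (n : ℕ) (hn : 1 ≤ n) :
    (∑ f : Fin n → Fin n,
      ((Finset.univ.filter (fun i : Fin n => ∃ t, f t = i)).card : ℝ))
      = (n : ℝ) * ((n : ℝ) ^ n - ((n : ℝ) - 1) ^ n) := by
  have key : ∀ i : Fin n,
      ((Finset.univ.filter (fun f : Fin n → Fin n => ∃ t, f t = i)).card : ℝ)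
        = (n : ℝ) ^ n - ((n : ℝ) - 1) ^ n := by
    intro i
    have hneg : (Finset.univ.filter (fun f : Fin n → Fin n => ¬ ∃ t, f t = i)).card
        = (n - 1) ^ n := by
      have : (Finset.univ.filter (fun f : Fin n → Fin n => ¬ ∃ t, f t = i))
          = Fintype.piFinset (fun _ : Fin n => Finset.univ.erase i) := by
        ext f
        simp [Fintype.mem_piFinset, not_exists]
      rw [this, Fintype.card_piFinset]
      simp [Finset.card_erase_of_mem]
    have htot := Finset.card_filter_add_card_filter_not
      (s := (Finset.univ : Finset (Fin n → Fin n)))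
      (p := fun f => ∃ t, f t = i)
    rw [hneg] at htot
    have hcard : (Finset.univ : Finset (Fin n → Fin n)).card = n ^ n := by
      simp [Finset.card_univ]
    rw [hcard] at htot
    have hle : (n - 1) ^ n ≤ n ^ n := Nat.pow_le_pow_left (Nat.sub_le n 1) n
    have heq : (Finset.univ.filter (fun f : Fin n → Fin n => ∃ t, f t = i)).card
        = n ^ n - (n - 1) ^ n := Nat.eq_sub_of_add_eq htot
    rw [heq]
    push_cast [Nat.cast_sub hle, Nat.cast_sub hn]
    ring
  calc (∑ f : Fin n → Fin n,
      ((Finset.univ.filter (fun i : Fin n => ∃ t, f t = i)).card : ℝ))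
      = ∑ f : Fin n → Fin n, ∑ i : Fin n, (if ∃ t, f t = i then (1:ℝ) else 0) := by
        apply Finset.sum_congr rfl; intro f _
        rw [Finset.card_filter]; push_cast; rfl
    _ = ∑ i : Fin n, ∑ f : Fin n → Fin n, (if ∃ t, f t = i then (1:ℝ) else 0) :=
        Finset.sum_comm
    _ = ∑ i : Fin n, ((Finset.univ.filter (fun f : Fin n → Fin n => ∃ t, f t = i)).card : ℝ) := by
        apply Finset.sum_congr rfl; intro i _
        rw [Finset.card_filter]; push_cast; rfl
    _ = (n : ℝ) * ((n : ℝ) ^ n - ((n : ℝ) - 1) ^ n) := by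
        simp [key, Finset.sum_const, Finset.card_univ]; ring

/-- Tightness of the `1 − 1/e` factor for the suggested matching algorithm on
the complete bipartite instance (`A = I = Fin n`, `E = A × I`, `n ≥ 1` i.i.d.
uniform draws `f : Fin n → I`):
(i) for every realization `f`, the maximum matching size of the realization
graph equals `n`;
(ii) the number of advertisers matched by the suggested matching algorithm,
`|{i ∈ I : ∃ t, f t = i}|`, equals the number of distinct values of `f`, and
its expectation equals `n·(1 − (1 − 1/n)ⁿ)`;
(iii) consequently the expected approximation ratio of the suggested matching
algorithm equals `1 − (1 − 1/n)ⁿ`, which tends to `1 − 1/e` as `n → ∞`. -/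
theorem suggested_matching_tightness (n : ℕ) (hn : 1 ≤ n) :
    (∀ f : Fin n → Fin n,
        realizationOPT n (Finset.univ : Finset (Fin n × Fin n)) f = n)
      ∧ (∀ f : Fin n → Fin n,
          (Finset.univ.filter (fun i : Fin n => ∃ t, f t = i)).card
            = (Finset.univ.image f).card)
      ∧ ((∑ f : Fin n → Fin n,
            ((Finset.univ.filter (fun i : Fin n => ∃ t, f t = i)).card : ℝ))
              / (n : ℝ) ^ n
          = (n : ℝ) * (1 - (1 - 1 / (n : ℝ)) ^ n))
      ∧ ((∑ f : Fin n → Fin n,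
            ((Finset.univ.filter (fun i : Fin n => ∃ t, f t = i)).card : ℝ)
              / (realizationOPT n (Finset.univ : Finset (Fin n × Fin n)) f : ℝ))
              / (n : ℝ) ^ n
          = 1 - (1 - 1 / (n : ℝ)) ^ n)
      ∧ Tendsto (fun n : ℕ => 1 - (1 - 1 / (n : ℝ)) ^ n) atTop
          (nhds (1 - 1 / Real.exp 1)) := by
  have hn0 : (n : ℝ) ≠ 0 := by positivity
  have hnpow : (n : ℝ) ^ n ≠ 0 := pow_ne_zero _ hn0
  have h1 : (1 - 1 / (n : ℝ)) = ((n : ℝ) - 1) / n := by field_simp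
  have hexp : (∑ f : Fin n → Fin n,
      ((Finset.univ.filter (fun i : Fin n => ∃ t, f t = i)).card : ℝ))
        / (n : ℝ) ^ n = (n : ℝ) * (1 - (1 - 1 / (n : ℝ)) ^ n) := by
    rw [sum_card_aux n hn, h1, div_pow]
    field_simp
  refine ⟨fun f => opt_eq_aux n f, fun f => ?_, hexp, ?_, ?_⟩
  · congr 1
    ext i
    simp [eq_comm]
  · have hterm : (∑ f : Fin n → Fin n,
        ((Finset.univ.filter (fun i : Fin n => ∃ t, f t = i)).card : ℝ)
          / (realizationOPT n (Finset.univ : Finset (Fin n × Fin n)) f : ℝ))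
        = (∑ f : Fin n → Fin n,
            ((Finset.univ.filter (fun i : Fin n => ∃ t, f t = i)).card : ℝ)) / n := by
      rw [Finset.sum_div]
      apply Finset.sum_congr rfl
      intro f _
      rw [opt_eq_aux n f]
    rw [hterm, sum_card_aux n hn, h1, div_pow]
    field_simp
  · have h := Real.tendsto_one_add_div_pow_exp (-1)
    have h2 : Tendsto (fun m : ℕ => (1 - 1 / (m : ℝ)) ^ m) atTop
        (nhds (1 / Real.exp 1)) := by
      convert h using 2 with m
      · ring_nf
      · rw [Real.exp_neg, one_div]
    simpa using (tendsto_const_nhds (x := (1:ℝ))).sub h2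
end
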